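/- Assume the subset LCM assumption: for every F ⊂ I and j ∈ F^c, E(x_j | X_F) = E(x_j X_Fᵀ)Σ_F^{-1}X_F almost surely. If A ⊆ F for an active set A and j ∈ F^c, then trace(M^SIR_{F∪{j}}) − trace(M^SIR_F) = 0. -/

import Mathlib

open MeasureTheory ProbabilityTheory Matrix Filter Finset
open scoped BigOperators ENNReal

noncomputable section

namespace TracePursuit

variable {Ω : Type*}

/-- Second-moment (= covariance, under mean zero) matrix of the coordinates of `X` in `F`. -/
def covM [MeasurableSpace Ω] (μ : Measure Ω) {p : ℕ} (X : Ω → Fin p → ℝ)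
    (F : Finset (Fin p)) : Matrix F F ℝ :=
  Matrix.of fun i j => ∫ ω, X ω i.1 * X ω j.1 ∂μ

/-- Slice probability `p_h = P(Y ∈ J_h)`. -/
def sliceP [MeasurableSpace Ω] (μ : Measure Ω) {H : ℕ} (Y : Ω → ℝ)
    (J : Fin H → Set ℝ) (h : Fin H) : ℝ :=
  (μ (Y ⁻¹' J h)).toReal

/-- Slice mean vector `U_{F,h} = E(X_F | Y ∈ J_h)`. -/
def sliceU [MeasurableSpace Ω] (μ : Measure Ω) {p H : ℕ} (X : Ω → Fin p → ℝ)
    (Y : Ω → ℝ) (J : Fin H → Set ℝ) (F : Finset (Fin p)) (h : Fin H) : F → ℝ :=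
  fun i => (∫ ω in Y ⁻¹' J h, X ω i.1 ∂μ) / sliceP μ Y J h

/-- Slice second-moment matrix `V_{F,h} = E(X_F X_Fᵀ | Y ∈ J_h)`. -/
def sliceV [MeasurableSpace Ω] (μ : Measure Ω) {p H : ℕ} (X : Ω → Fin p → ℝ)
    (Y : Ω → ℝ) (J : Fin H → Set ℝ) (F : Finset (Fin p)) (h : Fin H) : Matrix F F ℝ :=
  Matrix.of fun i j => (∫ ω in Y ⁻¹' J h, X ω i.1 * X ω j.1 ∂μ) / sliceP μ Y J h

/-- The SIR kernel matrix `M^SIR_F = Σ_F^{-1/2} (Σ_h p_h U_{F,h} U_{F,h}ᵀ) Σ_F^{-1/2}`,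
where `S` is the inverse square root `Σ_F^{-1/2}`. -/
def MSIR [MeasurableSpace Ω] (μ : Measure Ω) {p H : ℕ} (X : Ω → Fin p → ℝ)
    (Y : Ω → ℝ) (J : Fin H → Set ℝ) (F : Finset (Fin p)) (S : Matrix F F ℝ) :
    Matrix F F ℝ :=
  S * (∑ h, sliceP μ Y J h • vecMulVec (sliceU μ X Y J F h) (sliceU μ X Y J F h)) * S

/-- The SAVE kernel matrix
`M^SAVE_F = Σ_h p_h (Σ_F^{-1/2}(Σ_F - V_{F,h} + U_{F,h}U_{F,h}ᵀ)Σ_F^{-1/2})²`. -/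
def MSAVE [MeasurableSpace Ω] (μ : Measure Ω) {p H : ℕ} (X : Ω → Fin p → ℝ)
    (Y : Ω → ℝ) (J : Fin H → Set ℝ) (F : Finset (Fin p)) (S : Matrix F F ℝ) :
    Matrix F F ℝ :=
  ∑ h, sliceP μ Y J h •
    (S * (covM μ X F - sliceV μ X Y J F h
        + vecMulVec (sliceU μ X Y J F h) (sliceU μ X Y J F h)) * S) ^ 2

/-- `κ_F = Σ_h p_h U_{F,h}ᵀ Σ_F⁻¹ U_{F,h}`. -/
def kappaF [MeasurableSpace Ω] (μ : Measure Ω) {p H : ℕ} (X : Ω → Fin p → ℝ)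
    (Y : Ω → ℝ) (J : Fin H → Set ℝ) (F : Finset (Fin p)) : ℝ :=
  ∑ h, sliceP μ Y J h *
    (sliceU μ X Y J F h ⬝ᵥ (covM μ X F)⁻¹.mulVec (sliceU μ X Y J F h))

/-- The directional-regression kernel matrix `M^DR_F`. -/
def MDR [MeasurableSpace Ω] (μ : Measure Ω) {p H : ℕ} (X : Ω → Fin p → ℝ)
    (Y : Ω → ℝ) (J : Fin H → Set ℝ) (F : Finset (Fin p)) (S : Matrix F F ℝ) :
    Matrix F F ℝ :=
  (2 : ℝ) • (∑ h, sliceP μ Y J h • (S * sliceV μ X Y J F h * S) ^ 2)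
  + (2 : ℝ) • (∑ h, sliceP μ Y J h •
      (S * vecMulVec (sliceU μ X Y J F h) (sliceU μ X Y J F h) * S)) ^ 2
  + (2 : ℝ) • (kappaF μ X Y J F •
      (∑ h, sliceP μ Y J h •
        (S * vecMulVec (sliceU μ X Y J F h) (sliceU μ X Y J F h) * S)))
  - (2 : ℝ) • (1 : Matrix F F ℝ)

/-- The σ-algebra generated by `X_F`. -/
def mF [MeasurableSpace Ω] {p : ℕ} (X : Ω → Fin p → ℝ) (F : Finset (Fin p)) :
    MeasurableSpace Ω :=
  MeasurableSpace.comap (fun ω => fun i : F => X ω i.1) inferInstance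

/-- `θ_{j|F} = Σ_F⁻¹ E(x_j X_F)`. -/
def thetaJF [MeasurableSpace Ω] (μ : Measure Ω) {p : ℕ} (X : Ω → Fin p → ℝ)
    (F : Finset (Fin p)) (j : Fin p) : F → ℝ :=
  (covM μ X F)⁻¹.mulVec fun i => ∫ ω, X ω j * X ω i.1 ∂μ

/-- The subset linear conditional mean assumption:
for every `F ⊂ I` and `j ∈ Fᶜ`, `E(x_j | X_F) = E(x_j X_Fᵀ) Σ_F⁻¹ X_F` a.s. -/
def SubsetLCM [MeasurableSpace Ω] (μ : Measure Ω) {p : ℕ} (X : Ω → Fin p → ℝ) : Prop :=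
  ∀ (F : Finset (Fin p)) (j : Fin p), j ∉ F →
    (μ[fun ω => X ω j | mF X F]) =ᵐ[μ] fun ω => ∑ i : F, thetaJF μ X F j i * X ω i.1

/-- The subset constant conditional variance assumption:
for every `F ⊂ I` and `j ∈ Fᶜ`, `var(x_j | X_F)` is a.s. constant. -/
def SubsetCCV [MeasurableSpace Ω] (μ : Measure Ω) {p : ℕ} (X : Ω → Fin p → ℝ) : Prop :=
  ∀ (F : Finset (Fin p)) (j : Fin p), j ∉ F → ∃ c : ℝ,
    (fun ω => (μ[fun ω' => X ω' j ^ 2 | mF X F]) ω - ((μ[fun ω' => X ω' j | mF X F]) ω) ^ 2)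
      =ᵐ[μ] fun _ => c

/-- The residual `x_{j|F} = x_j - E(x_j | X_F)`. -/
def xres [MeasurableSpace Ω] (μ : Measure Ω) {p : ℕ} (X : Ω → Fin p → ℝ)
    (F : Finset (Fin p)) (j : Fin p) : Ω → ℝ :=
  fun ω => X ω j - (μ[fun ω' => X ω' j | mF X F]) ω

/-- Variance of a real function. -/
def varF [MeasurableSpace Ω] (μ : Measure Ω) (f : Ω → ℝ) : ℝ :=
  ∫ ω, f ω ^ 2 ∂μ - (∫ ω, f ω ∂μ) ^ 2

/-- `σ²_{j|F} = var(x_{j|F})`. -/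
def sigma2 [MeasurableSpace Ω] (μ : Measure Ω) {p : ℕ} (X : Ω → Fin p → ℝ)
    (F : Finset (Fin p)) (j : Fin p) : ℝ :=
  varF μ (xres μ X F j)

/-- `γ_{j|F} = x_{j|F}/σ_{j|F}`. -/
def gammaRes [MeasurableSpace Ω] (μ : Measure Ω) {p : ℕ} (X : Ω → Fin p → ℝ)
    (F : Finset (Fin p)) (j : Fin p) : Ω → ℝ :=
  fun ω => xres μ X F j ω / Real.sqrt (sigma2 μ X F j)

/-- `γ_{j|F,h} = E(γ_{j|F} | Y ∈ J_h)`. -/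
def gammaH [MeasurableSpace Ω] (μ : Measure Ω) {p H : ℕ} (X : Ω → Fin p → ℝ)
    (Y : Ω → ℝ) (J : Fin H → Set ℝ) (F : Finset (Fin p)) (j : Fin p) (h : Fin H) : ℝ :=
  (∫ ω in Y ⁻¹' J h, gammaRes μ X F j ω ∂μ) / sliceP μ Y J h

/-- `ζ_{j|F,h} = E(γ_{j|F}² | Y ∈ J_h)`. -/
def zetaH [MeasurableSpace Ω] (μ : Measure Ω) {p H : ℕ} (X : Ω → Fin p → ℝ)
    (Y : Ω → ℝ) (J : Fin H → Set ℝ) (F : Finset (Fin p)) (j : Fin p) (h : Fin H) : ℝ :=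
  (∫ ω in Y ⁻¹' J h, gammaRes μ X F j ω ^ 2 ∂μ) / sliceP μ Y J h

/-- `E(X_F γ_{j|F} | Y ∈ J_h)`. -/
def sliceXGamma [MeasurableSpace Ω] (μ : Measure Ω) {p H : ℕ} (X : Ω → Fin p → ℝ)
    (Y : Ω → ℝ) (J : Fin H → Set ℝ) (F : Finset (Fin p)) (j : Fin p) (h : Fin H) : F → ℝ :=
  fun i => (∫ ω in Y ⁻¹' J h, X ω i.1 * gammaRes μ X F j ω ∂μ) / sliceP μ Y J h

/-- `φ_{j|F,h} = Σ_F^{-1/2} (U_{F,h} γ_{j|F,h} - E(X_F γ_{j|F} | Y ∈ J_h))`. -/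
def phiH [MeasurableSpace Ω] (μ : Measure Ω) {p H : ℕ} (X : Ω → Fin p → ℝ)
    (Y : Ω → ℝ) (J : Fin H → Set ℝ) (F : Finset (Fin p)) (S : Matrix F F ℝ)
    (j : Fin p) (h : Fin H) : F → ℝ :=
  S.mulVec fun i => sliceU μ X Y J F h i * gammaH μ X Y J F j h
    - sliceXGamma μ X Y J F j h i

/-- `ν_{j|F,h} = Σ_F^{-1/2} E(X_F γ_{j|F} | Y ∈ J_h)`. -/
def nuH [MeasurableSpace Ω] (μ : Measure Ω) {p H : ℕ} (X : Ω → Fin p → ℝ)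
    (Y : Ω → ℝ) (J : Fin H → Set ℝ) (F : Finset (Fin p)) (S : Matrix F F ℝ)
    (j : Fin p) (h : Fin H) : F → ℝ :=
  S.mulVec (sliceXGamma μ X Y J F j h)

/-- `ι_{j|F,h} = Σ_F^{-1/2} U_{F,h} γ_{j|F,h}`. -/
def iotaH [MeasurableSpace Ω] (μ : Measure Ω) {p H : ℕ} (X : Ω → Fin p → ℝ)
    (Y : Ω → ℝ) (J : Fin H → Set ℝ) (F : Finset (Fin p)) (S : Matrix F F ℝ)
    (j : Fin p) (h : Fin H) : F → ℝ :=
  gammaH μ X Y J F j h • S.mulVec (sliceU μ X Y J F h)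

/-- `ι_{j|F} = Σ_h p_h ι_{j|F,h}`. -/
def iotaSum [MeasurableSpace Ω] (μ : Measure Ω) {p H : ℕ} (X : Ω → Fin p → ℝ)
    (Y : Ω → ℝ) (J : Fin H → Set ℝ) (F : Finset (Fin p)) (S : Matrix F F ℝ)
    (j : Fin p) : F → ℝ :=
  ∑ h, sliceP μ Y J h • iotaH μ X Y J F S j h

/-- `ϱ_{j|F} = Σ_h p_h γ_{j|F,h}²`. -/
def rhoJF [MeasurableSpace Ω] (μ : Measure Ω) {p H : ℕ} (X : Ω → Fin p → ℝ)
    (Y : Ω → ℝ) (J : Fin H → Set ℝ) (F : Finset (Fin p)) (j : Fin p) : ℝ :=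
  ∑ h, sliceP μ Y J h * gammaH μ X Y J F j h ^ 2

/-- `{J_h}` is a measurable partition of the sample space of `Y`. -/
def IsSlicePartition {H : ℕ} (J : Fin H → Set ℝ) : Prop :=
  (∀ h, MeasurableSet (J h)) ∧ Pairwise (Function.onFun Disjoint J) ∧ (⋃ h, J h) = Set.univ

/-- `S` is a symmetric inverse square root of `Sig`, i.e. `S = Σ'^{-1/2}`. -/
def IsInvSqrt {n : Type*} [Fintype n] [DecidableEq n] (S Sig : Matrix n n ℝ) : Prop :=
  S.IsSymm ∧ S * S = Sig⁻¹

end TracePursuit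

open TracePursuit

/-!
The trace of `M^SIR_F` is `∑ₕ pₕ U_{F,h}ᵀ Σ_F⁻¹ U_{F,h}`. Under the LCM assumption the residual
`r = x_j - θᵀ X_F`, `θ = Σ_F⁻¹ E(x_j X_F)`, satisfies `E(r | X_F) = 0`, hence `E(r | X_A) = 0`.
Since `r` is the sum of an `X_A`-measurable and an `X_{Aᶜ}`-measurable function and
`Y ⟂ X_{Aᶜ} | X_A`, we get `E(r; Y ∈ J_h) = E(E(r | X_A); Y ∈ J_h) = 0`,
i.e. `U_{j,h} = θᵀ U_{F,h}`. Then `U_{F∪{j},h} = Σ_{F∪{j},F} Σ_F⁻¹ U_{F,h}`, and for vectors of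
this form the quadratic form of `Σ_{F∪{j}}⁻¹` reduces to that of `Σ_F⁻¹`.
-/

section LinearAlgebra

variable {K ι m n : Type*} [Field K] [Fintype m] [Fintype n]

lemma dotProduct_extend_zero {e : m → n} (he : Function.Injective e) (v : n → K) (a : m → K) :
    v ⬝ᵥ Function.extend e a 0 = (v ∘ e) ⬝ᵥ a :=
  (Fintype.sum_of_injective e he _ _
    (fun i hi => by rw [Function.extend_apply' _ _ _ (by simpa using hi)]; simp)
    (fun i => by simp [he.extend_apply])).symm

lemma mulVec_extend_zero (M : Matrix n n K) {e : m → n} (he : Function.Injective e)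
    (a : m → K) : M *ᵥ Function.extend e a 0 = M.submatrix id e *ᵥ a := by
  funext i
  exact dotProduct_extend_zero he _ a

variable [DecidableEq m] [DecidableEq n]

lemma dotProduct_inv_mulVec_eq_submatrix {M : Matrix n n K} (hM : IsUnit M.det) {e : m → n}
    (he : Function.Injective e) (hMe : IsUnit (M.submatrix e e).det) {u : n → K} {a : m → K}
    (hu : u = M.submatrix id e *ᵥ a) :
    u ⬝ᵥ (M⁻¹ *ᵥ u) = (u ∘ e) ⬝ᵥ ((M.submatrix e e)⁻¹ *ᵥ (u ∘ e)) := by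
  have hb : M⁻¹ *ᵥ u = Function.extend e a 0 := by
    rw [hu, ← mulVec_extend_zero M he, mulVec_mulVec, nonsing_inv_mul _ hM, one_mulVec]
  have ha : (M.submatrix e e)⁻¹ *ᵥ (u ∘ e) = a := by
    have hue : u ∘ e = M.submatrix e e *ᵥ a := by rw [hu]; rfl
    rw [hue, mulVec_mulVec, nonsing_inv_mul _ hMe, one_mulVec]
  rw [hb, ha, dotProduct_extend_zero he]

lemma dotProduct_inv_mulVec_insert [DecidableEq ι] {C : Matrix ι ι K} (hC : C.IsSymm)
    {F : Finset ι} {j : ι} (hF : IsUnit (C.submatrix (Subtype.val : F → ι) Subtype.val).det)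
    (hG : IsUnit (C.submatrix (Subtype.val : ↥(insert j F) → ι) Subtype.val).det) {u : ι → K}
    (hu : u j = ((C.submatrix (Subtype.val : F → ι) Subtype.val)⁻¹ *ᵥ fun i : F => C j i.1) ⬝ᵥ
      fun i : F => u i.1) :
    (fun i : ↥(insert j F) => u i.1) ⬝ᵥ
        ((C.submatrix (Subtype.val : ↥(insert j F) → ι) Subtype.val)⁻¹ *ᵥ
          fun i : ↥(insert j F) => u i.1)
      = (fun i : F => u i.1) ⬝ᵥ
          ((C.submatrix (Subtype.val : F → ι) Subtype.val)⁻¹ *ᵥ fun i : F => u i.1) := by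
  set CF := C.submatrix (Subtype.val : F → ι) Subtype.val
  let e : F → ↥(insert j F) := fun i => ⟨i, Finset.mem_insert_of_mem i.2⟩
  have he : Function.Injective e := fun i k hik => Subtype.ext (congrArg Subtype.val hik :)
  refine dotProduct_inv_mulVec_eq_submatrix hG he hF (a := CF⁻¹ *ᵥ fun i : F => u i.1) ?_
  funext ⟨i, hi⟩
  rcases Finset.mem_insert.mp hi with rfl | hiF
  · have hCF : CF⁻¹ᵀ = CF⁻¹ := (hC.submatrix _).inv
    change u i = (fun k : F => C i k.1) ⬝ᵥ (CF⁻¹ *ᵥ fun k : F => u k.1)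
    rw [hu, dotProduct_mulVec, ← vecMul_transpose, hCF]
  · change u i = (CF *ᵥ (CF⁻¹ *ᵥ fun k : F => u k.1)) ⟨i, hiF⟩
    rw [mulVec_mulVec, mul_nonsing_inv _ hF, one_mulVec]

end LinearAlgebra

lemma Set.mul_indicator_one {ι M₀ : Type*} [MulZeroOneClass M₀] (s : Set ι) (f : ι → M₀) :
    (fun i => f i * s.indicator (fun _ => 1) i) = s.indicator f :=
  funext fun i => by rw [← Set.indicator_mul_right, funext fun j => mul_one (f j)]

namespace MeasureTheory

variable {Ω : Type*} {m' : MeasurableSpace Ω} [mΩ : MeasurableSpace Ω] {μ : Measure Ω}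

lemma condExp_indicator_one_nonneg (s : Set Ω) :
    0 ≤ᵐ[μ] μ[s.indicator (fun _ => (1 : ℝ)) | m'] :=
  condExp_nonneg (Eventually.of_forall fun _ => Set.indicator_nonneg (fun _ _ => zero_le_one) _)

lemma integral_mul_condExp_of_stronglyMeasurable [IsFiniteMeasure μ] (hm' : m' ≤ mΩ)
    {f g : Ω → ℝ} (hg : StronglyMeasurable[m'] g) (hf : Integrable f μ)
    (hgf : Integrable (g * f) μ) :
    ∫ ω, g ω * f ω ∂μ = ∫ ω, g ω * (μ[f|m']) ω ∂μ :=
  calc ∫ ω, g ω * f ω ∂μ = ∫ ω, (μ[g * f|m']) ω ∂μ := (integral_condExp hm').symm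
    _ = ∫ ω, g ω * (μ[f|m']) ω ∂μ :=
      integral_congr_ae (condExp_mul_of_stronglyMeasurable_left hg hgf hf)

end MeasureTheory

namespace ProbabilityTheory

variable {Ω β γ : Type*} {m' : MeasurableSpace Ω} [mΩ : MeasurableSpace Ω] {μ : Measure Ω}
  [IsFiniteMeasure μ] [StandardBorelSpace Ω] {hm' : m' ≤ mΩ} [MeasurableSpace β]
  [mγ : MeasurableSpace γ] {Y : Ω → β} {Z : Ω → γ} {t : Set β}

lemma CondIndepFun.measureReal_inter_preimage (hind : CondIndepFun m' hm' Y Z μ)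
    (hY : Measurable Y) (hZ : Measurable Z) (ht : MeasurableSet t) {v : Set γ}
    (hv : MeasurableSet v) :
    μ.real (Y ⁻¹' t ∩ Z ⁻¹' v) = ∫ ω in Z ⁻¹' v, (μ⟦Y ⁻¹' t|m'⟧) ω ∂μ := by
  have hmul := (condIndepFun_iff_condExp_inter_preimage_eq_mul hY hZ).mp hind t v ht hv
  have hint : Integrable ((μ⟦Y ⁻¹' t|m'⟧) * (Z ⁻¹' v).indicator fun _ => (1 : ℝ)) μ := by
    change Integrable (fun ω => (μ⟦Y ⁻¹' t|m'⟧) ω * (Z ⁻¹' v).indicator (fun _ => (1 : ℝ)) ω) μ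
    rw [Set.mul_indicator_one]
    exact integrable_condExp.indicator (hZ hv)
  calc μ.real (Y ⁻¹' t ∩ Z ⁻¹' v) = ∫ ω, (μ⟦Y ⁻¹' t ∩ Z ⁻¹' v|m'⟧) ω ∂μ := by
        rw [integral_condExp hm', integral_indicator ((hY ht).inter (hZ hv)),
          setIntegral_const, smul_eq_mul, mul_one]
    _ = ∫ ω, (μ⟦Y ⁻¹' t|m'⟧) ω * (μ⟦Z ⁻¹' v|m'⟧) ω ∂μ := integral_congr_ae hmul
    _ = ∫ ω, (μ⟦Y ⁻¹' t|m'⟧) ω * (Z ⁻¹' v).indicator (fun _ => (1 : ℝ)) ω ∂μ :=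
        (integral_mul_condExp_of_stronglyMeasurable hm' stronglyMeasurable_condExp
          ((integrable_const 1).indicator (hZ hv)) hint).symm
    _ = ∫ ω in Z ⁻¹' v, (μ⟦Y ⁻¹' t|m'⟧) ω ∂μ := by
        rw [Set.mul_indicator_one, integral_indicator (hZ hv)]

lemma CondIndepFun.trim_restrict_preimage_eq_trim_withDensity
    (hind : CondIndepFun m' hm' Y Z μ) (hY : Measurable Y) (hZ : Measurable Z)
    (ht : MeasurableSet t) :
    (μ.restrict (Y ⁻¹' t)).trim hZ.comap_le
      = (μ.withDensity fun ω => ENNReal.ofReal ((μ⟦Y ⁻¹' t|m'⟧) ω)).trim hZ.comap_le := by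
  refine @Measure.ext _ (mγ.comap Z) _ _ fun s hs => ?_
  obtain ⟨v, hv, rfl⟩ := id hs
  rw [trim_measurableSet_eq _ hs, trim_measurableSet_eq _ hs,
    Measure.restrict_apply (hZ hv), withDensity_apply _ (hZ hv),
    ← ofReal_integral_eq_lintegral_ofReal integrable_condExp.integrableOn
      (ae_restrict_of_ae (condExp_indicator_one_nonneg _)),
    ← hind.measureReal_inter_preimage hY hZ ht hv, Set.inter_comm, ofReal_measureReal]

theorem CondIndepFun.setIntegral_preimage_condExp (hind : CondIndepFun m' hm' Y Z μ)
    (hY : Measurable Y) (hZ : Measurable Z) (ht : MeasurableSet t) {g : Ω → ℝ}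
    (hg : Integrable g μ) (hgZ : StronglyMeasurable[mγ.comap Z] g) :
    ∫ ω in Y ⁻¹' t, g ω ∂μ = ∫ ω in Y ⁻¹' t, (μ[g|m']) ω ∂μ := by
  set φ := μ⟦Y ⁻¹' t|m'⟧
  have hs : MeasurableSet (Y ⁻¹' t) := hY ht
  have hφ1 : ∀ᵐ ω ∂μ, ‖φ ω‖ ≤ 1 := by
    filter_upwards [ae_bdd_abs_condExp_of_ae_bdd_abs (m := m') (R := (1 : ℝ))
      (f := (Y ⁻¹' t).indicator fun _ => (1 : ℝ))
      (Eventually.of_forall fun ω => by by_cases hω : ω ∈ Y ⁻¹' t <;> simp [hω])] with ω hω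
    simpa using hω
  have hφm : StronglyMeasurable[m'] φ := stronglyMeasurable_condExp
  have hcondExp_int : Integrable ((μ[g|m']) * (Y ⁻¹' t).indicator fun _ => (1 : ℝ)) μ := by
    change Integrable (fun ω => (μ[g|m']) ω * (Y ⁻¹' t).indicator (fun _ => (1 : ℝ)) ω) μ
    rw [Set.mul_indicator_one]
    exact integrable_condExp.indicator hs
  calc ∫ ω in Y ⁻¹' t, g ω ∂μ
      = ∫ ω, g ω ∂(μ.withDensity fun ω => ENNReal.ofReal (φ ω)) := by
        rw [integral_trim hZ.comap_le hgZ,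
          hind.trim_restrict_preimage_eq_trim_withDensity hY hZ ht,
          ← integral_trim hZ.comap_le hgZ]
    _ = ∫ ω, φ ω * g ω ∂μ := by
        rw [integral_withDensity_eq_integral_toReal_smul
          (hφm.measurable.mono hm' le_rfl).ennreal_ofReal
          (Eventually.of_forall fun _ => ENNReal.ofReal_lt_top)]
        refine integral_congr_ae ?_
        filter_upwards [condExp_indicator_one_nonneg (μ := μ) (m' := m') (Y ⁻¹' t)] with ω hω
        simp [ENNReal.toReal_ofReal (show 0 ≤ φ ω from hω)]
    _ = ∫ ω, φ ω * (μ[g|m']) ω ∂μ :=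
        integral_mul_condExp_of_stronglyMeasurable hm' hφm hg
          (hg.bdd_mul (hφm.mono hm').aestronglyMeasurable hφ1)
    _ = ∫ ω, (μ[g|m']) ω * (Y ⁻¹' t).indicator (fun _ => (1 : ℝ)) ω ∂μ := by
        simp_rw [mul_comm (φ _)]
        exact (integral_mul_condExp_of_stronglyMeasurable hm' stronglyMeasurable_condExp
          ((integrable_const 1).indicator hs) hcondExp_int).symm
    _ = ∫ ω in Y ⁻¹' t, (μ[g|m']) ω ∂μ := by
        rw [Set.mul_indicator_one, integral_indicator hs]

theorem CondIndepFun.setIntegral_preimage_condExp_add (hind : CondIndepFun m' hm' Y Z μ)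
    (hY : Measurable Y) (hZ : Measurable Z) (ht : MeasurableSet t) {g h : Ω → ℝ}
    (hg : Integrable g μ) (hgZ : StronglyMeasurable[mγ.comap Z] g) (hh : Integrable h μ)
    (hhm : StronglyMeasurable[m'] h) :
    ∫ ω in Y ⁻¹' t, (g + h) ω ∂μ = ∫ ω in Y ⁻¹' t, (μ[g + h|m']) ω ∂μ := by
  rw [integral_congr_ae (ae_restrict_of_ae (condExp_add hg hh m')),
    condExp_of_stronglyMeasurable hm' hhm hh, Pi.add_def, Pi.add_def,
    integral_add hg.integrableOn hh.integrableOn,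
    integral_add integrable_condExp.integrableOn hh.integrableOn,
    hind.setIntegral_preimage_condExp hY hZ ht hg hgZ]

end ProbabilityTheory

namespace TracePursuit

variable {Ω : Type*} [mΩ : MeasurableSpace Ω] {p : ℕ}

lemma measurable_mF (X : Ω → Fin p → ℝ) {F : Finset (Fin p)} {i : Fin p} (hi : i ∈ F) :
    Measurable[mF X F] fun ω => X ω i :=
  (measurable_pi_apply (⟨i, hi⟩ : F)).comp
    (Measurable.of_comap_le (f := fun ω (k : F) => X ω k) le_rfl)

lemma mF_le {X : Ω → Fin p → ℝ} (hX : Measurable X) (F : Finset (Fin p)) : mF X F ≤ mΩ :=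
  Measurable.comap_le (measurable_pi_lambda _ fun i => (measurable_pi_apply i.1).comp hX)

lemma mF_mono (X : Ω → Fin p → ℝ) {A F : Finset (Fin p)} (hAF : A ⊆ F) : mF X A ≤ mF X F :=
  Measurable.comap_le <| @measurable_pi_lambda _ _ _ (mF X F) _ (fun ω (i : A) => X ω i)
    fun i => measurable_mF X (hAF i.2)

lemma covM_posDef {μ : Measure Ω} {X : Ω → Fin p → ℝ} (hpos : (covM μ X Finset.univ).PosDef)
    (F : Finset (Fin p)) : (covM μ X F).PosDef :=
  hpos.submatrix (e := fun i : F => (⟨i.1, Finset.mem_univ _⟩ : (Finset.univ : Finset (Fin p))))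
    fun _ _ h => Subtype.ext (congrArg Subtype.val h :)

lemma trace_MSIR (μ : Measure Ω) {H : ℕ} (X : Ω → Fin p → ℝ) (Y : Ω → ℝ) (J : Fin H → Set ℝ)
    (F : Finset (Fin p)) {S : Matrix F F ℝ} (hS : S * S = (covM μ X F)⁻¹) :
    (MSIR μ X Y J F S).trace = ∑ h, sliceP μ Y J h *
      (sliceU μ X Y J F h ⬝ᵥ ((covM μ X F)⁻¹ *ᵥ sliceU μ X Y J F h)) := by
  rw [MSIR, trace_mul_cycle, hS, Matrix.mul_sum, trace_sum]
  refine Finset.sum_congr rfl fun h _ => ?_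
  rw [Matrix.mul_smul, trace_smul, mul_vecMulVec, trace_vecMulVec, dotProduct_comm, smul_eq_mul]

lemma integrable_sum_mul_coord {μ : Measure Ω} {X : Ω → Fin p → ℝ}
    (hXi : ∀ i, Integrable (fun ω => X ω i) μ) {F : Finset (Fin p)} (c : F → ℝ) (s : Finset F) :
    Integrable (fun ω => ∑ i ∈ s, c i * X ω i) μ :=
  integrable_finsetSum _ fun i _ => (hXi i).const_mul (c i)

lemma condExp_sub_sum_thetaJF_eq_zero {μ : Measure Ω} [IsFiniteMeasure μ]
    {X : Ω → Fin p → ℝ} (hX : Measurable X) (hXi : ∀ i, Integrable (fun ω => X ω i) μ)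
    {A F : Finset (Fin p)} (hAF : A ⊆ F) {j : Fin p}
    (hLCM : μ[fun ω => X ω j | mF X F] =ᵐ[μ] fun ω => ∑ i : F, thetaJF μ X F j i * X ω i.1) :
    μ[(fun ω => X ω j) - (fun ω => ∑ i : F, thetaJF μ X F j i * X ω i.1) | mF X A] =ᵐ[μ] 0 := by
  set L := fun ω => ∑ i : F, thetaJF μ X F j i * X ω i.1
  have hL : StronglyMeasurable[mF X F] L :=
    (Finset.measurable_sum _ fun i _ => (measurable_mF X i.2).const_mul _).stronglyMeasurable
  have hF : μ[(fun ω => X ω j) - L | mF X F] =ᵐ[μ] 0 := by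
    filter_upwards [condExp_sub (hXi j) (integrable_sum_mul_coord hXi _ _) (mF X F), hLCM]
      with ω hsub hω
    rw [hsub, Pi.sub_apply, hω, condExp_of_stronglyMeasurable (mF_le hX F) hL
      (integrable_sum_mul_coord hXi _ _), sub_self, Pi.zero_apply]
  refine (condExp_condExp_of_le (mF_mono X hAF) (mF_le hX F)).symm.trans
    ((condExp_congr_ae hF).trans ?_)
  rw [condExp_zero]

lemma setIntegral_preimage_eq_sum_thetaJF [StandardBorelSpace Ω] {μ : Measure Ω}
    [IsFiniteMeasure μ] {X : Ω → Fin p → ℝ} {Y : Ω → ℝ} (hX : Measurable X) (hY : Measurable Y)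
    (hXi : ∀ i, Integrable (fun ω => X ω i) μ) {A F : Finset (Fin p)} (hleA : mF X A ≤ mΩ)
    (hA : CondIndepFun (mF X A) hleA Y (fun ω => fun i : (Aᶜ : Finset (Fin p)) => X ω i.1) μ)
    (hAF : A ⊆ F) {j : Fin p} (hj : j ∉ F)
    (hLCM : μ[fun ω => X ω j | mF X F] =ᵐ[μ] fun ω => ∑ i : F, thetaJF μ X F j i * X ω i.1)
    {t : Set ℝ} (ht : MeasurableSet t) :
    ∫ ω in Y ⁻¹' t, X ω j ∂μ = ∑ i : F, thetaJF μ X F j i * ∫ ω in Y ⁻¹' t, X ω i ∂μ := by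
  have hr_A := condExp_sub_sum_thetaJF_eq_zero hX hXi hAF hLCM
  set θ := thetaJF μ X F j
  have hsum_int := integrable_sum_mul_coord hXi θ
  set r : Ω → ℝ := (fun ω => X ω j) - fun ω => ∑ i : F, θ i * X ω i
  set outA := Finset.univ.filter fun i : F => i.1 ∉ A
  set inA := Finset.univ.filter fun i : F => i.1 ∈ A
  have hsplit : r = (fun ω => X ω j - ∑ i ∈ outA, θ i * X ω i)
      + fun ω => -∑ i ∈ inA, θ i * X ω i := by
    funext ω
    change X ω j - ∑ i, θ i * X ω i = X ω j - ∑ i ∈ outA, θ i * X ω i + -∑ i ∈ inA, θ i * X ω i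
    rw [← Finset.sum_filter_not_add_sum_filter Finset.univ (fun i : F => i.1 ∈ A)]
    ring
  have hout : StronglyMeasurable[mF X Aᶜ] fun ω => X ω j - ∑ i ∈ outA, θ i * X ω i :=
    ((measurable_mF X (Finset.mem_compl.mpr fun hjA => hj (hAF hjA))).sub
      (Finset.measurable_sum _ fun i hi => (measurable_mF X (Finset.mem_compl.mpr
        (Finset.mem_filter.mp hi).2)).const_mul (θ i))).stronglyMeasurable
  have hin : StronglyMeasurable[mF X A] fun ω => -∑ i ∈ inA, θ i * X ω i :=
    (Finset.measurable_sum _ fun i hi =>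
      (measurable_mF X (Finset.mem_filter.mp hi).2).const_mul (θ i)).neg.stronglyMeasurable
  have hr_zero : ∫ ω in Y ⁻¹' t, r ω ∂μ = 0 := by
    have h := hA.setIntegral_preimage_condExp_add hY
      (measurable_pi_lambda _ fun i => (measurable_pi_apply i.1).comp hX) ht
      (g := fun ω => X ω j - ∑ i ∈ outA, θ i * X ω i) ((hXi j).sub (hsum_int _)) hout
      (h := fun ω => -∑ i ∈ inA, θ i * X ω i) (hsum_int _).neg hin
    rw [← hsplit, integral_congr_ae (ae_restrict_of_ae hr_A)] at h
    simpa using h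
  change ∫ ω in Y ⁻¹' t, (X ω j - ∑ i : F, θ i * X ω i) ∂μ = 0 at hr_zero
  rw [integral_sub (hXi j).integrableOn (hsum_int _).integrableOn,
    integral_finsetSum _ fun i _ => ((hXi i.1).const_mul (θ i)).restrict] at hr_zero
  simp_rw [integral_const_mul] at hr_zero
  linarith

end TracePursuit

theorem sir_trace_difference_zero_general {Ω : Type*} [m0 : MeasurableSpace Ω]
    [StandardBorelSpace Ω]
    (μ : Measure Ω) [IsProbabilityMeasure μ]
    {p H : ℕ} (X : Ω → Fin p → ℝ) (Y : Ω → ℝ)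
    (hX : Measurable X) (hY : Measurable Y)
    (hmom : ∀ i, MemLp (fun ω => X ω i) 4 μ)
    (hpos : (covM μ X Finset.univ).PosDef)
    (J : Fin H → Set ℝ) (hJ : IsSlicePartition J)
    (invS : ∀ F : Finset (Fin p), Matrix F F ℝ)
    (hinvS : ∀ F, IsInvSqrt (invS F) (covM μ X F))
    (hLCM : SubsetLCM μ X)
    (A : Finset (Fin p)) (hleA : mF X A ≤ m0)
    (hA : CondIndepFun (mF X A) hleA Y (fun ω => fun i : (Aᶜ : Finset (Fin p)) => X ω i.1) μ)
    (F : Finset (Fin p)) (hAF : A ⊆ F) (j : Fin p) (hj : j ∉ F) :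
    (MSIR μ X Y J (insert j F) (invS (insert j F))).trace
      - (MSIR μ X Y J F (invS F)).trace = 0 := by
  have hXi : ∀ i, Integrable (fun ω => X ω i) μ := fun i => (hmom i).integrable (by norm_num)
  have hdet : ∀ G, IsUnit (covM μ X G).det := fun G => (covM_posDef hpos G).det_pos.ne'.isUnit
  have hsymm : (Matrix.of fun a b : Fin p => ∫ ω, X ω a * X ω b ∂μ).IsSymm :=
    IsSymm.ext fun a b => by simp only [of_apply, mul_comm]
  rw [trace_MSIR μ X Y J _ (hinvS _).2, trace_MSIR μ X Y J _ (hinvS _).2,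
    ← Finset.sum_sub_distrib]
  refine Finset.sum_eq_zero fun h _ => ?_
  rw [sub_eq_zero]
  refine congrArg _ (dotProduct_inv_mulVec_insert hsymm (j := j) (hdet F) (hdet _)
    (u := fun k => (∫ ω in Y ⁻¹' J h, X ω k ∂μ) / sliceP μ Y J h) ?_)
  rw [setIntegral_preimage_eq_sum_thetaJF hX hY hXi hleA hA hAF hj (hLCM F j hj) (hJ.1 h),
    Finset.sum_div]
  exact Finset.sum_congr rfl fun i _ => mul_div_assoc _ _ _

/-- **Theorem 1, part 2.** Under the subset LCM assumption, if `A ⊆ F` for an active set `A`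
(i.e. `Y ⟂ X_{Aᶜ} | X_A`) and `j ∈ Fᶜ`, then
`trace(M^SIR_{F∪{j}}) - trace(M^SIR_F) = 0`. -/
theorem sir_trace_difference_zero {Ω : Type*} [m0 : MeasurableSpace Ω]
    [StandardBorelSpace Ω] [Nonempty Ω]
    (μ : Measure Ω) [IsProbabilityMeasure μ]
    {p H : ℕ} (X : Ω → Fin p → ℝ) (Y : Ω → ℝ)
    (hX : Measurable X) (hY : Measurable Y)
    (hmom : ∀ i, MemLp (fun ω => X ω i) 4 μ)
    (hmean : ∀ i, ∫ ω, X ω i ∂μ = 0)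
    (hpos : (covM μ X Finset.univ).PosDef)
    (J : Fin H → Set ℝ) (hJ : IsSlicePartition J)
    (hph : ∀ h, 0 < sliceP μ Y J h)
    (invS : ∀ F : Finset (Fin p), Matrix F F ℝ)
    (hinvS : ∀ F, IsInvSqrt (invS F) (covM μ X F))
    (hLCM : SubsetLCM μ X)
    (A : Finset (Fin p)) (hleA : mF X A ≤ m0)
    (hA : CondIndepFun (mF X A) hleA Y (fun ω => fun i : (Aᶜ : Finset (Fin p)) => X ω i.1) μ)
    (F : Finset (Fin p)) (hAF : A ⊆ F) (j : Fin p) (hj : j ∉ F) :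
    (MSIR μ X Y J (insert j F) (invS (insert j F))).trace
      - (MSIR μ X Y J F (invS F)).trace = 0 :=
  sir_trace_difference_zero_general (m0 := m0) μ X Y hX hY hmom hpos J hJ invS hinvS hLCM A hleA hA
    F hAF j hj
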